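/- Let q be a power of an odd prime and n ≤ q − 1 an even integer. Let a = (α_1, …, α_n) be an n-tuple of distinct nonzero elements of F_q such that η(−α_i · L_a(α_i)) = 1 for all 1 ≤ i ≤ n and η(−∏_{i=1}^n α_i) = 1. Then there exists an MDS self-dual code over F_q of length n + 2, i.e., a linear code C ⊆ F_q^{n+2} with C = C⊥, dim C = (n+2)/2, and minimum Hamming distance (n+2)/2 + 1. -/

import Mathlib

/-- The Euclidean dual of a linear code `C ⊆ F^n`. -/
def dualCode {F : Type*} [Field F] {n : ℕ} (C : Submodule F (Fin n → F)) :
    Submodule F (Fin n → F) where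
  carrier := {x | ∀ c ∈ C, ∑ i, x i * c i = 0}
  add_mem' := by
    intro a b ha hb c hc
    simp only [Set.mem_setOf_eq] at ha hb ⊢
    simp [Pi.add_apply, add_mul, Finset.sum_add_distrib, ha c hc, hb c hc]
  zero_mem' := by intro c hc; simp
  smul_mem' := by
    intro r a ha c hc
    simp only [Set.mem_setOf_eq] at ha ⊢
    simp [Pi.smul_apply, smul_eq_mul, mul_assoc, ← Finset.mul_sum, ha c hc]

/-- `C` has minimum Hamming distance `d`. -/
def IsMinDist {F : Type*} [Field F] [DecidableEq F] {n : ℕ}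
    (C : Submodule F (Fin n → F)) (d : ℕ) : Prop :=
  (∀ c ∈ C, c ≠ 0 → d ≤ hammingNorm c) ∧ ∃ c ∈ C, c ≠ 0 ∧ hammingNorm c = d

/-- The generalized Reed–Solomon code `GRS_k(a, v)`:
codewords `(v₁ f(α₁), …, v_n f(α_n))` for `deg f ≤ k − 1`. -/
noncomputable def GRSCode (F : Type*) [Field F] {n : ℕ} (k : ℕ) (a v : Fin n → F) :
    Submodule F (Fin n → F) :=
  (Polynomial.degreeLT F k).map
    (LinearMap.pi fun i => v i • ((Polynomial.aeval (a i)).toLinearMap : Polynomial F →ₗ[F] F))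

/-- The extended generalized Reed–Solomon code `GRS_k(a, v, ∞)` of length `n + 1`:
codewords `(v₁ f(α₁), …, v_n f(α_n), f_{k−1})` for `deg f ≤ k − 1`, where `f_{k−1}`
is the coefficient of `x^{k−1}` in `f`. -/
noncomputable def extGRSCode (F : Type*) [Field F] {n : ℕ} (k : ℕ) (a v : Fin n → F) :
    Submodule F (Fin (n + 1) → F) :=
  (Polynomial.degreeLT F k).map
    (LinearMap.pi fun i : Fin (n + 1) =>
      if h : (i : ℕ) < n then
        v ⟨i, h⟩ • ((Polynomial.aeval (a ⟨i, h⟩)).toLinearMap : Polynomial F →ₗ[F] F)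
      else Polynomial.lcoeff F (k - 1))

open Finset in


open Polynomial Finset in
lemma aux_leadingCoeff_basisDivisor {F : Type*} [Field F] (x y : F) :
    (Lagrange.basisDivisor x y).leadingCoeff = (x - y)⁻¹ := by
  rw [Lagrange.basisDivisor, leadingCoeff_mul, leadingCoeff_C,
    (Polynomial.monic_X_sub_C y).leadingCoeff, mul_one]

open Polynomial Finset in
lemma aux_coeff_basis {F : Type*} [Field F] {ι : Type*} [DecidableEq ι]
    {s : Finset ι} {v : ι → F} (hvs : Set.InjOn v s) {i : ι} (hi : i ∈ s) :
    (Lagrange.basis s v i).coeff (#s - 1) = ∏ j ∈ s.erase i, (v i - v j)⁻¹ := by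
  rw [← Lagrange.natDegree_basis hvs hi, coeff_natDegree, Lagrange.basis,
    leadingCoeff_prod]
  exact Finset.prod_congr rfl fun j _ => aux_leadingCoeff_basisDivisor _ _

open Polynomial Finset in
lemma aux_key_sum {F : Type*} [Field F] {m : ℕ} (b : Fin m → F)
    (hb : Function.Injective b) (f : F[X]) (hf : f.degree < (m : ℕ)) :
    ∑ i, f.eval (b i) * (∏ j ∈ univ.erase i, (b i - b j))⁻¹ = f.coeff (m - 1) := by
  have hvs : Set.InjOn b (univ : Finset (Fin m)) := Function.Injective.injOn hb
  have hcard : #(univ : Finset (Fin m)) = m := by simp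
  have hrep := Lagrange.eq_interpolate hvs (show f.degree < #(univ : Finset (Fin m)) by
    rwa [hcard])
  conv_rhs => rw [hrep]
  rw [Lagrange.interpolate_apply, finset_sum_coeff]
  refine Finset.sum_congr rfl fun i _ => ?_
  rw [coeff_C_mul]
  congr 1
  rw [show m - 1 = #(univ : Finset (Fin m)) - 1 by rw [hcard],
    aux_coeff_basis hvs (mem_univ i), Finset.prod_inv_distrib]

open Polynomial in
lemma aux_degree_le_pred {F : Type*} [Field F] {f : F[X]} {k : ℕ}
    (hf : f.degree < (k : ℕ)) : f.degree ≤ ((k - 1 : ℕ) : WithBot ℕ) := by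
  rcases eq_or_ne f 0 with rfl | h
  · simp
  · have h1 : f.natDegree < k := (natDegree_lt_iff_degree_lt h).mpr hf
    exact degree_le_of_natDegree_le (by omega)

open Polynomial Finset in
lemma aux_coeff_mul_top {F : Type*} [Field F] {k : ℕ} (hk : 1 ≤ k) {f g : F[X]}
    (hf : f.degree < (k : ℕ)) (hg : g.degree < (k : ℕ)) :
    (f * g).coeff (2 * k - 2) = f.coeff (k - 1) * g.coeff (k - 1) := by
  rw [coeff_mul, Finset.sum_eq_single ((k - 1, k - 1) : ℕ × ℕ)]
  · intro p hp hne
    rw [Finset.HasAntidiagonal.mem_antidiagonal] at hp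
    have h1 : k ≤ p.1 ∨ k ≤ p.2 := by
      by_contra hcon
      push_neg at hcon
      exact hne (Prod.ext (by omega) (by omega))
    rcases h1 with h1 | h1
    · rw [coeff_eq_zero_of_degree_lt (lt_of_lt_of_le hf (by exact_mod_cast h1)), zero_mul]
    · rw [coeff_eq_zero_of_degree_lt (lt_of_lt_of_le hg (by exact_mod_cast h1)), mul_zero]
  · intro h
    exact absurd (Finset.HasAntidiagonal.mem_antidiagonal.mpr (by omega)) h

open Polynomial Finset in
lemma aux_orth {F : Type*} [Field F] {m k : ℕ} (hm : m = 2 * k - 1) (hk : 1 ≤ k)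
    (b : Fin m → F) (hb : Function.Injective b) (v : Fin m → F)
    (hv : ∀ i, v i ^ 2 * ∏ j ∈ univ.erase i, (b i - b j) = -1)
    {f g : F[X]} (hf : f.degree < (k : ℕ)) (hg : g.degree < (k : ℕ)) :
    ∑ i, (v i * f.eval (b i)) * (v i * g.eval (b i))
      + f.coeff (k - 1) * g.coeff (k - 1) = 0 := by
  have hL : ∀ i : Fin m, (∏ j ∈ univ.erase i, (b i - b j)) ≠ 0 := fun i =>
    Finset.prod_ne_zero_iff.mpr fun j hj =>
      sub_ne_zero.mpr fun h => (mem_erase.mp hj).1 ((hb h).symm)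
  have hv2 : ∀ i, v i ^ 2 = -(∏ j ∈ univ.erase i, (b i - b j))⁻¹ := by
    intro i
    rw [show -(∏ j ∈ univ.erase i, (b i - b j))⁻¹
        = -1 / (∏ j ∈ univ.erase i, (b i - b j)) by rw [neg_div, one_div],
      eq_div_iff (hL i)]
    exact hv i
  have hsum : ∑ i, (v i * f.eval (b i)) * (v i * g.eval (b i))
      = -∑ i, (f * g).eval (b i) * (∏ j ∈ univ.erase i, (b i - b j))⁻¹ := by
    rw [← Finset.sum_neg_distrib]
    refine Finset.sum_congr rfl fun i _ => ?_
    calc (v i * f.eval (b i)) * (v i * g.eval (b i))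
        = v i ^ 2 * (f.eval (b i) * g.eval (b i)) := by ring
      _ = -((f * g).eval (b i) * (∏ j ∈ univ.erase i, (b i - b j))⁻¹) := by
          rw [hv2 i, eval_mul]; ring
  have hdfg : (f * g).degree < ((m : ℕ) : WithBot ℕ) := by
    calc (f * g).degree ≤ f.degree + g.degree := degree_mul_le f g
      _ ≤ ((k - 1 : ℕ) : WithBot ℕ) + ((k - 1 : ℕ) : WithBot ℕ) :=
          add_le_add (aux_degree_le_pred hf) (aux_degree_le_pred hg)
      _ = ((2 * k - 2 : ℕ) : WithBot ℕ) := by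
          rw [← Nat.cast_add]; congr 1; omega
      _ < ((m : ℕ) : WithBot ℕ) := by exact_mod_cast (show 2 * k - 2 < m by omega)
  rw [hsum, aux_key_sum b hb (f * g) hdfg, show m - 1 = 2 * k - 2 by omega,
    aux_coeff_mul_top hk hf hg]
  ring

open Polynomial Finset in
lemma aux_card_zeros {F : Type*} [Field F] [DecidableEq F] {M m : ℕ} (b : Fin m → F)
    (hb : Function.Injective b) (f : F[X]) (hf : f ≠ 0) (S : Finset (Fin M))
    (hS : ∀ i ∈ S, ∃ h : (i : ℕ) < m, f.eval (b ⟨i, h⟩) = 0) :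
    S.card ≤ f.natDegree := by
  have h1 : S.card ≤ f.roots.toFinset.card := by
    apply Finset.card_le_card_of_injOn
      (fun i : Fin M => if h : (i : ℕ) < m then b ⟨i, h⟩ else 0)
    · intro i hi
      obtain ⟨h, he⟩ := hS i hi
      simp only [dif_pos h, Finset.mem_coe, Multiset.mem_toFinset]
      exact (Polynomial.mem_roots hf).mpr he
    · intro i hi j hj hij
      obtain ⟨h1', _⟩ := hS i hi
      obtain ⟨h2', _⟩ := hS j hj
      simp only at hij
      rw [dif_pos h1', dif_pos h2'] at hij
      exact Fin.ext (by simpa using congrArg Fin.val (hb hij))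
  calc S.card ≤ _ := h1
    _ ≤ Multiset.card f.roots := f.roots.toFinset_card_le
    _ ≤ f.natDegree := Polynomial.card_roots' f

open Finset in
lemma aux_card_filter_lt {M t : ℕ} (h : t ≤ M) :
    #((univ : Finset (Fin M)).filter (fun i : Fin M => (i : ℕ) < t)) = t := by
  have himg : (((univ : Finset (Fin M)).filter (fun i : Fin M => (i : ℕ) < t)).image Fin.val)
      = Finset.range t := by
    ext x
    simp only [mem_image, mem_filter, mem_univ, true_and, mem_range]
    constructor
    · rintro ⟨i, hi, rfl⟩; exact hi
    · intro hx; exact ⟨⟨x, lt_of_lt_of_le hx h⟩, hx, rfl⟩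
  have := congrArg Finset.card himg
  rwa [Finset.card_image_of_injective _ Fin.val_injective, Finset.card_range] at this

open Finset in
/-- Lemma 2.8: if `a` consists of `n ≤ q − 1` distinct nonzero elements with
`η(−α_i·L_a(α_i)) = 1` for all `i` and `η(−∏ᵢ α_i) = 1`, then there is a `q`-ary MDS
self-dual code of length `n + 2`. -/
theorem mds_self_dual_length_add_two_of_eta
    (q : ℕ) (hq_pp : IsPrimePow q) (hq_odd : Odd q)
    (F : Type*) [Field F] [Fintype F] [DecidableEq F] (hF : Fintype.card F = q)
    (n : ℕ) (hn : Even n) (hnq : n ≤ q - 1)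
    (a : Fin n → F) (ha : Function.Injective a) (ha0 : ∀ i, a i ≠ 0)
    (hη : ∀ i : Fin n,
      quadraticChar F (-(a i * ∏ m ∈ univ.erase i, (a i - a m))) = 1)
    (hprod : quadraticChar F (-(∏ i, a i)) = 1) :
    ∃ C : Submodule F (Fin (n + 2) → F),
      dualCode C = C ∧
      Module.finrank F C = (n + 2) / 2 ∧
      IsMinDist C ((n + 2) / 2 + 1) := by
  classical
  obtain ⟨t, ht⟩ := id hn
  set k : ℕ := n / 2 + 1 with hkdef
  have hk1 : 1 ≤ k := by omega
  have hkn : k ≤ n + 1 := by omega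
  -- the evaluation points: a₁, …, a_n, 0
  set b : Fin (n + 1) → F := fun i => if h : (i : ℕ) < n then a ⟨i, h⟩ else 0 with hbdef
  have hbval : ∀ (i : Fin (n + 1)) (h : (i : ℕ) < n), b i = a ⟨i, h⟩ := by
    intro i h; simp only [hbdef, dif_pos h]
  have hblast : ∀ (i : Fin (n + 1)), ¬ (i : ℕ) < n → b i = 0 := by
    intro i h; simp only [hbdef, dif_neg h]
  have hbcast : ∀ j₀ : Fin n, b (Fin.castSucc j₀) = a j₀ := by
    intro j₀
    rw [hbval _ (by simpa using j₀.isLt)]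
    congr 1
  have hb : Function.Injective b := by
    intro i j hij
    by_cases hi : (i : ℕ) < n <;> by_cases hj : (j : ℕ) < n
    · rw [hbval i hi, hbval j hj] at hij
      exact Fin.ext (by simpa using congrArg Fin.val (ha hij))
    · rw [hbval i hi, hblast j hj] at hij
      exact absurd hij (ha0 _)
    · rw [hblast i hi, hbval j hj] at hij
      exact absurd hij.symm (ha0 _)
    · exact Fin.ext (by omega)
  -- the quadratic character condition at every evaluation point
  have hLb : ∀ i : Fin (n + 1),
      quadraticChar F (-(∏ j ∈ univ.erase i, (b i - b j))) = 1 := by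
    intro i
    rcases Nat.lt_or_ge (i : ℕ) n with hi | hi
    · -- interior point
      have hbi : b i = a ⟨i, hi⟩ := hbval i hi
      have h1 : ∀ j₀ : Fin n,
          (if Fin.castSucc j₀ = i then (1:F) else b i - b (Fin.castSucc j₀))
          = (if j₀ = (⟨i, hi⟩ : Fin n) then (1:F) else a ⟨i, hi⟩ - a j₀) := by
        intro j₀
        rw [hbi, hbcast]
        exact if_congr (by rw [Fin.ext_iff, Fin.ext_iff]; simp) rfl rfl
      have h2 : (∏ j₀ : Fin n, if Fin.castSucc j₀ = i then (1:F)
            else b i - b (Fin.castSucc j₀))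
          = ∏ j₀ ∈ univ.erase (⟨i, hi⟩ : Fin n), (a ⟨i, hi⟩ - a j₀) :=
        calc (∏ j₀ : Fin n, if Fin.castSucc j₀ = i then (1:F)
              else b i - b (Fin.castSucc j₀))
            = ∏ j₀ : Fin n, (if j₀ = (⟨i, hi⟩ : Fin n) then (1:F) else a ⟨i, hi⟩ - a j₀) :=
              Finset.prod_congr rfl fun j₀ _ => h1 j₀
          _ = ∏ j₀ ∈ univ.erase (⟨i, hi⟩ : Fin n),
                (if j₀ = (⟨i, hi⟩ : Fin n) then (1:F) else a ⟨i, hi⟩ - a j₀) :=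
              (Finset.prod_erase univ
                (f := fun j₀ => if j₀ = (⟨i, hi⟩ : Fin n) then (1:F)
                  else a ⟨i, hi⟩ - a j₀) (if_pos rfl)).symm
          _ = ∏ j₀ ∈ univ.erase (⟨i, hi⟩ : Fin n), (a ⟨i, hi⟩ - a j₀) :=
              Finset.prod_congr rfl fun j₀ hj₀ => if_neg (Finset.mem_erase.mp hj₀).1
      have hne : Fin.last n ≠ i := fun h => by
        have := congrArg Fin.val h
        simp only [Fin.val_last] at this
        omega
      have hkey : ∏ j ∈ univ.erase i, (b i - b j)
          = a ⟨i, hi⟩ * ∏ m ∈ univ.erase (⟨i, hi⟩ : Fin n), (a ⟨i, hi⟩ - a m) := by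
        calc ∏ j ∈ univ.erase i, (b i - b j)
            = ∏ j ∈ univ.erase i, (if j = i then (1:F) else b i - b j) :=
              Finset.prod_congr rfl fun j hj => (if_neg (Finset.mem_erase.mp hj).1).symm
          _ = ∏ j : Fin (n + 1), (if j = i then (1:F) else b i - b j) :=
              Finset.prod_erase _ (if_pos rfl)
          _ = (∏ j₀ : Fin n, if Fin.castSucc j₀ = i then (1:F)
                else b i - b (Fin.castSucc j₀))
                * (if Fin.last n = i then (1:F) else b i - b (Fin.last n)) :=
              Fin.prod_univ_castSucc _
          _ = (∏ j₀ ∈ univ.erase (⟨i, hi⟩ : Fin n), (a ⟨i, hi⟩ - a j₀)) * a ⟨i, hi⟩ := by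
              rw [h2, if_neg hne, hblast (Fin.last n) (by simp), hbi, sub_zero]
          _ = a ⟨i, hi⟩ * ∏ m ∈ univ.erase (⟨i, hi⟩ : Fin n), (a ⟨i, hi⟩ - a m) :=
              mul_comm _ _
      rw [hkey]
      exact hη ⟨i, hi⟩
    · -- the extra point 0
      have hilast : i = Fin.last n := Fin.ext (by simp only [Fin.val_last]; omega)
      subst hilast
      have hkey : ∏ j ∈ univ.erase (Fin.last n), (b (Fin.last n) - b j)
          = ∏ m : Fin n, a m := by
        calc ∏ j ∈ univ.erase (Fin.last n), (b (Fin.last n) - b j)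
            = ∏ j ∈ univ.erase (Fin.last n),
                (if j = Fin.last n then (1:F) else b (Fin.last n) - b j) :=
              Finset.prod_congr rfl fun j hj => (if_neg (Finset.mem_erase.mp hj).1).symm
          _ = ∏ j : Fin (n + 1), (if j = Fin.last n then (1:F) else b (Fin.last n) - b j) :=
              Finset.prod_erase _ (if_pos rfl)
          _ = (∏ j₀ : Fin n, if Fin.castSucc j₀ = Fin.last n then (1:F)
                else b (Fin.last n) - b (Fin.castSucc j₀))
                * (if Fin.last n = Fin.last n then (1:F)
                    else b (Fin.last n) - b (Fin.last n)) :=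
              Fin.prod_univ_castSucc _
          _ = ∏ j₀ : Fin n, (- a j₀) := by
              rw [if_pos rfl, mul_one]
              refine Finset.prod_congr rfl fun j₀ _ => ?_
              rw [if_neg (Fin.castSucc_lt_last j₀).ne, hblast (Fin.last n) (by simp),
                hbcast, zero_sub]
          _ = ∏ j₀ : Fin n, ((-1 : F) * a j₀) :=
              Finset.prod_congr rfl fun j₀ _ => (neg_one_mul _).symm
          _ = (-1 : F) ^ n * ∏ m : Fin n, a m := by
              rw [Finset.prod_mul_distrib, Finset.prod_const, Finset.card_univ,
                Fintype.card_fin]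
          _ = ∏ m : Fin n, a m := by rw [hn.neg_one_pow, one_mul]
      rw [hkey]
      exact hprod
  -- choose the column multipliers v
  have hvex : ∀ i : Fin (n + 1), ∃ w : F, w ≠ 0 ∧
      w ^ 2 * ∏ j ∈ univ.erase i, (b i - b j) = -1 := by
    intro i
    have h1 := hLb i
    set u : F := -(∏ j ∈ univ.erase i, (b i - b j)) with hu
    have hu0 : u ≠ 0 := by
      intro h
      rw [h] at h1
      simp [quadraticChar_zero] at h1
    obtain ⟨w, hw⟩ := (quadraticChar_one_iff_isSquare hu0).mp h1
    have hw0 : w ≠ 0 := by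
      rintro rfl
      rw [mul_zero] at hw
      exact hu0 hw
    refine ⟨w⁻¹, inv_ne_zero hw0, ?_⟩
    have hL : (∏ j ∈ univ.erase i, (b i - b j)) = -u := by rw [hu]; ring
    rw [hL, hw]
    field_simp
  choose v hv0 hv1 using hvex
  -- the code
  set T : Polynomial F →ₗ[F] (Fin (n + 1 + 1) → F) :=
    LinearMap.pi (fun i : Fin (n + 1 + 1) =>
      if h : (i : ℕ) < n + 1 then
        v ⟨i, h⟩ • ((Polynomial.aeval (b ⟨i, h⟩)).toLinearMap : Polynomial F →ₗ[F] F)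
      else Polynomial.lcoeff F (k - 1)) with hTdef
  have hCT : extGRSCode F k b v = (Polynomial.degreeLT F k).map T := rfl
  have hTval : ∀ (f : Polynomial F) (i : Fin (n + 2)),
      T f i = if h : (i : ℕ) < n + 1 then v ⟨i, h⟩ * f.eval (b ⟨i, h⟩)
        else f.coeff (k - 1) := by
    intro f i
    rw [hTdef, LinearMap.pi_apply]
    by_cases h : (i : ℕ) < n + 1
    · rw [dif_pos h, dif_pos h, LinearMap.smul_apply, AlgHom.toLinearMap_apply,
        smul_eq_mul, Polynomial.coe_aeval_eq_eval]
    · rw [dif_neg h, dif_neg h, Polynomial.lcoeff_apply]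
  have hcode : ∀ x : Fin (n + 2) → F, x ∈ extGRSCode F k b v ↔
      ∃ f : Polynomial F, f.degree < (k : ℕ) ∧ ∀ i : Fin (n + 2),
        x i = if h : (i : ℕ) < n + 1 then v ⟨i, h⟩ * f.eval (b ⟨i, h⟩)
          else f.coeff (k - 1) := by
    intro x
    rw [hCT, Submodule.mem_map]
    constructor
    · rintro ⟨f, hf, rfl⟩
      exact ⟨f, Polynomial.mem_degreeLT.mp hf, fun i => (hTval f i).symm ▸ rfl⟩
    · rintro ⟨f, hf, hx⟩
      exact ⟨f, Polynomial.mem_degreeLT.mpr hf, funext fun i => by rw [hTval f i, ← hx i]⟩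
  -- self-orthogonality
  have horth : ∀ x ∈ extGRSCode F k b v, ∀ y ∈ extGRSCode F k b v,
      ∑ i, x i * y i = 0 := by
    intro x hx y hy
    obtain ⟨f, hf, hxf⟩ := (hcode x).mp hx
    obtain ⟨g, hg, hyg⟩ := (hcode y).mp hy
    have hkey := aux_orth (m := n + 1) (k := k) (by omega) hk1 b hb v hv1 hf hg
    have hterm : ∀ i : Fin (n + 1),
        x (Fin.castSucc i) * y (Fin.castSucc i)
          = (v i * f.eval (b i)) * (v i * g.eval (b i)) := by
      intro i
      have hlt : ((Fin.castSucc i : Fin (n + 2)) : ℕ) < n + 1 := by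
        simpa using i.isLt
      have hmk : (⟨((Fin.castSucc i : Fin (n + 2)) : ℕ), hlt⟩ : Fin (n + 1)) = i :=
        Fin.ext (by simp)
      rw [hxf, hyg, dif_pos hlt, dif_pos hlt, hmk]
    have hlast : x (Fin.last (n + 1)) * y (Fin.last (n + 1))
        = f.coeff (k - 1) * g.coeff (k - 1) := by
      have hnlt : ¬ ((Fin.last (n + 1) : Fin (n + 2)) : ℕ) < n + 1 := by simp
      rw [hxf, hyg, dif_neg hnlt, dif_neg hnlt]
    calc ∑ i, x i * y i
        = (∑ i : Fin (n + 1), x (Fin.castSucc i) * y (Fin.castSucc i))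
            + x (Fin.last (n + 1)) * y (Fin.last (n + 1)) :=
          Fin.sum_univ_castSucc _
      _ = (∑ i : Fin (n + 1), (v i * f.eval (b i)) * (v i * g.eval (b i)))
            + f.coeff (k - 1) * g.coeff (k - 1) := by
          rw [hlast]
          congr 1
          exact Finset.sum_congr rfl fun i _ => hterm i
      _ = 0 := hkey
  have hCle : extGRSCode F k b v ≤ dualCode (extGRSCode F k b v) := by
    intro x hx c hc
    exact horth x hx c hc
  -- the rank of the code
  have hrank : Module.finrank F (extGRSCode F k b v) = k := by
    have hrange : (Polynomial.degreeLT F k).map T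
        = LinearMap.range (T ∘ₗ (Polynomial.degreeLT F k).subtype) := by
      rw [LinearMap.range_comp, Submodule.range_subtype]
    have hker : ∀ f ∈ Polynomial.degreeLT F k, T f = 0 → f = 0 := by
      intro f hf hTf
      apply Polynomial.eq_zero_of_degree_lt_of_eval_index_eq_zero
        (s := (univ : Finset (Fin (n + 1)))) (v := b) hb.injOn
      · rw [Polynomial.mem_degreeLT] at hf
        refine lt_of_lt_of_le hf ?_
        rw [Finset.card_univ, Fintype.card_fin]
        exact_mod_cast hkn
      · intro i _
        have hlt : ((i : ℕ) : ℕ) < n + 1 := i.isLt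
        have h0 := congrFun hTf (⟨(i : ℕ), by omega⟩ : Fin (n + 2))
        rw [hTval f ⟨(i : ℕ), by omega⟩, dif_pos hlt] at h0
        have hmk : (⟨(i : ℕ), hlt⟩ : Fin (n + 1)) = i := Fin.ext rfl
        rw [hmk] at h0
        rcases mul_eq_zero.mp h0 with h | h
        · exact absurd h (hv0 i)
        · exact h
    have hinj : Function.Injective (T ∘ₗ (Polynomial.degreeLT F k).subtype) := by
      intro p q hpq
      have hsub : ((p : Polynomial F) - q) ∈ Polynomial.degreeLT F k :=
        sub_mem p.2 q.2
      have hT0 : T ((p : Polynomial F) - q) = 0 := by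
        rw [map_sub]
        simpa [sub_eq_zero] using hpq
      have := hker _ hsub hT0
      exact Subtype.ext (by rwa [sub_eq_zero] at this)
    have hfr := LinearMap.finrank_range_of_inj hinj
    have hdl : Module.finrank F (Polynomial.degreeLT F k) = k := by
      rw [LinearEquiv.finrank_eq (Polynomial.degreeLTEquiv F k), Module.finrank_pi,
        Fintype.card_fin]
    rw [hCT, hrange, hfr, hdl]
  -- duality via the standard bilinear form
  set B : LinearMap.BilinForm F (Fin (n + 2) → F) :=
    LinearMap.mk₂ F (fun x y => ∑ i, x i * y i)
      (fun m₁ m₂ y => by simp [add_mul, Finset.sum_add_distrib])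
      (fun c m y => by simp [Finset.mul_sum, mul_assoc])
      (fun m y₁ y₂ => by simp [mul_add, Finset.sum_add_distrib])
      (fun c m y => by
        simp only [smul_eq_mul, Pi.smul_apply, Finset.mul_sum]
        exact Finset.sum_congr rfl fun i _ => by ring) with hBdef
  have hBapp : ∀ x y : Fin (n + 2) → F, B x y = ∑ i, x i * y i := fun x y => rfl
  have hBsymm : ∀ x y : Fin (n + 2) → F, B x y = B y x := by
    intro x y
    rw [hBapp, hBapp]
    exact Finset.sum_congr rfl fun i _ => mul_comm _ _
  have hBrefl : B.IsRefl := by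
    intro x y h
    rw [hBsymm]
    exact h
  have hBnd : B.Nondegenerate := by
    have hsep : ∀ x : Fin (n + 2) → F, (∀ y, B x y = 0) → x = 0 := by
      intro x hx
      funext i
      have h := hx (Pi.single i 1)
      rw [hBapp] at h
      simpa [Pi.single_apply, mul_ite, Finset.sum_ite_eq'] using h
    exact ⟨hsep, fun y hy => hsep y fun x => by rw [hBsymm]; exact hy x⟩
  have hdualC : dualCode (extGRSCode F k b v) = B.orthogonal (extGRSCode F k b v) := by
    ext x
    constructor
    · intro hx
      rw [LinearMap.BilinForm.mem_orthogonal_iff]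
      intro c hc
      rw [hBapp]
      exact (Finset.sum_congr rfl fun i _ => mul_comm _ _).trans (hx c hc)
    · intro hx c hc
      have := (LinearMap.BilinForm.mem_orthogonal_iff.mp hx) c hc
      rw [hBapp] at this
      rw [← this]
      exact Finset.sum_congr rfl fun i _ => mul_comm _ _
  have hfindual : Module.finrank F (dualCode (extGRSCode F k b v)) = (n + 2) - k := by
    rw [hdualC, LinearMap.BilinForm.finrank_orthogonal hBnd, hrank,
      Module.finrank_pi, Fintype.card_fin]
  have hCeq : extGRSCode F k b v = dualCode (extGRSCode F k b v) := by
    apply Submodule.eq_of_le_of_finrank_eq hCle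
    rw [hrank, hfindual]
    omega
  refine ⟨extGRSCode F k b v, hCeq.symm, by rw [hrank]; omega, ?_, ?_⟩
  · -- minimum distance lower bound
    intro c hc hc0
    obtain ⟨f, hf, hcf⟩ := (hcode c).mp hc
    have hf0 : f ≠ 0 := by
      rintro rfl
      apply hc0
      funext i
      rw [hcf i]
      split <;> simp
    set Z : Finset (Fin (n + 2)) := univ.filter (fun i : Fin (n + 2) => c i = 0) with hZdef
    have hNorm : hammingNorm c + Z.card = n + 2 := by
      have h1 := Finset.card_filter_add_card_filter_not
        (s := (univ : Finset (Fin (n + 2)))) (p := fun i : Fin (n + 2) => ¬ c i = 0)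
      have h2 : hammingNorm c
          = (univ.filter (fun i : Fin (n + 2) => ¬ c i = 0)).card := rfl
      have h3 : Z = univ.filter (fun i : Fin (n + 2) => ¬ ¬ c i = 0) := by
        rw [hZdef]
        exact Finset.filter_congr fun i _ => by tauto
      rw [h2, h3]
      simpa using h1
    have hZev : ∀ i ∈ Z, (i : ℕ) < n + 1 → ∃ h : (i : ℕ) < n + 1,
        f.eval (b ⟨i, h⟩) = 0 := by
      intro i hi hlt
      refine ⟨hlt, ?_⟩
      have hci := (Finset.mem_filter.mp hi).2
      rw [hcf i, dif_pos hlt] at hci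
      rcases mul_eq_zero.mp hci with h | h
      · exact absurd h (hv0 _)
      · exact h
    have hZcard : Z.card ≤ k - 1 := by
      by_cases hck : f.coeff (k - 1) = 0
      · -- then deg f < k - 1 and the last coordinate may vanish
        have hdlt : f.degree < ((k - 1 : ℕ) : WithBot ℕ) := by
          rcases lt_or_eq_of_le (aux_degree_le_pred hf) with h | h
          · exact h
          · exfalso
            have hnd : f.natDegree = k - 1 :=
              Polynomial.natDegree_eq_of_degree_eq_some h
            have := Polynomial.coeff_natDegree (p := f)
            rw [hnd, hck] at this
            exact Polynomial.leadingCoeff_ne_zero.mpr hf0 this.symm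
        have hnd2 : f.natDegree < k - 1 :=
          (Polynomial.natDegree_lt_iff_degree_lt hf0).mpr hdlt
        have herase : (Z.erase (⟨n + 1, by omega⟩ : Fin (n + 2))).card ≤ f.natDegree := by
          apply aux_card_zeros b hb f hf0
          intro i hi
          obtain ⟨hine, hiZ⟩ := Finset.mem_erase.mp hi
          have hlt : (i : ℕ) < n + 1 := by
            rcases Nat.lt_or_ge (i : ℕ) (n + 1) with h | h
            · exact h
            · exact absurd (Fin.ext (by omega : (i : ℕ) = n + 1)) hine
          exact hZev i hiZ hlt
        have hZer : Z.card ≤ (Z.erase (⟨n + 1, by omega⟩ : Fin (n + 2))).card + 1 := by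
          by_cases hm : (⟨n + 1, by omega⟩ : Fin (n + 2)) ∈ Z
          · rw [Finset.card_erase_add_one hm]
          · rw [Finset.erase_eq_of_notMem hm]
            omega
        omega
      · -- the last coordinate is nonzero
        have hnd2 : f.natDegree ≤ k - 1 := by
          have := (Polynomial.natDegree_lt_iff_degree_lt hf0).mpr hf
          omega
        have : Z.card ≤ f.natDegree := by
          apply aux_card_zeros b hb f hf0
          intro i hi
          have hlt : (i : ℕ) < n + 1 := by
            by_contra h
            have hci := (Finset.mem_filter.mp hi).2
            rw [hcf i, dif_neg h] at hci
            exact hck hci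
          exact hZev i hi hlt
        omega
    omega
  · -- a codeword of weight exactly (n+2)/2 + 1
    set T₀ : Finset (Fin (n + 1)) :=
      univ.filter (fun j : Fin (n + 1) => (j : ℕ) < k - 1) with hT₀def
    have hT₀card : T₀.card = k - 1 := aux_card_filter_lt (by omega)
    set f₀ : Polynomial F := ∏ j ∈ T₀, (Polynomial.X - Polynomial.C (b j)) with hf₀def
    have hf₀monic : f₀.Monic :=
      Polynomial.monic_prod_of_monic _ _ fun j _ => Polynomial.monic_X_sub_C _
    have hf₀nd : f₀.natDegree = k - 1 := by
      rw [hf₀def, Polynomial.natDegree_prod _ _ (fun j _ => Polynomial.X_sub_C_ne_zero _)]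
      simp [Polynomial.natDegree_X_sub_C, hT₀card]
    have hf₀deg : f₀.degree < (k : ℕ) := by
      rw [Polynomial.degree_eq_natDegree hf₀monic.ne_zero, hf₀nd]
      exact_mod_cast (show k - 1 < k by omega)
    have hf₀coeff : f₀.coeff (k - 1) = 1 := by
      rw [← hf₀nd]
      exact hf₀monic.coeff_natDegree
    set c₀ : Fin (n + 2) → F := fun i =>
      if h : (i : ℕ) < n + 1 then v ⟨i, h⟩ * f₀.eval (b ⟨i, h⟩) else f₀.coeff (k - 1)
      with hc₀def
    have hc₀mem : c₀ ∈ extGRSCode F k b v :=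
      (hcode c₀).mpr ⟨f₀, hf₀deg, fun i => rfl⟩
    have hc₀last : c₀ ⟨n + 1, by omega⟩ = 1 := by
      rw [hc₀def]
      simp only
      rw [dif_neg (lt_irrefl (n + 1)), hf₀coeff]
    have hc₀ne : c₀ ≠ 0 := by
      intro h
      have := congrFun h ⟨n + 1, by omega⟩
      rw [hc₀last] at this
      exact one_ne_zero this
    have heval0 : ∀ i : Fin (n + 1), f₀.eval (b i) = 0 ↔ (i : ℕ) < k - 1 := by
      intro i
      rw [hf₀def, Polynomial.eval_prod, Finset.prod_eq_zero_iff]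
      constructor
      · rintro ⟨j, hj, hz⟩
        simp only [Polynomial.eval_sub, Polynomial.eval_X, Polynomial.eval_C] at hz
        have hij : i = j := hb (sub_eq_zero.mp hz)
        subst hij
        exact (Finset.mem_filter.mp hj).2
      · intro hik
        exact ⟨i, Finset.mem_filter.mpr ⟨Finset.mem_univ _, hik⟩, by simp⟩
    have hzeroset : univ.filter (fun i : Fin (n + 2) => c₀ i = 0)
        = univ.filter (fun i : Fin (n + 2) => (i : ℕ) < k - 1) := by
      ext i
      simp only [Finset.mem_filter, Finset.mem_univ, true_and]
      by_cases h : (i : ℕ) < n + 1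
      · rw [show c₀ i = v ⟨i, h⟩ * f₀.eval (b ⟨i, h⟩) from by rw [hc₀def]; exact dif_pos h]
        rw [mul_eq_zero]
        constructor
        · rintro (hv' | he)
          · exact absurd hv' (hv0 _)
          · exact (heval0 ⟨i, h⟩).mp he
        · intro hik
          exact Or.inr ((heval0 ⟨i, h⟩).mpr hik)
      · rw [show c₀ i = f₀.coeff (k - 1) from by rw [hc₀def]; exact dif_neg h, hf₀coeff]
        exact iff_of_false one_ne_zero (by omega)
    have hnormc₀ : hammingNorm c₀ = (n + 2) / 2 + 1 := by
      have h1 := Finset.card_filter_add_card_filter_not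
        (s := (univ : Finset (Fin (n + 2)))) (p := fun i : Fin (n + 2) => ¬ c₀ i = 0)
      have h2 : hammingNorm c₀
          = (univ.filter (fun i : Fin (n + 2) => ¬ c₀ i = 0)).card := rfl
      have h3 : univ.filter (fun i : Fin (n + 2) => ¬ ¬ c₀ i = 0)
          = univ.filter (fun i : Fin (n + 2) => c₀ i = 0) :=
        Finset.filter_congr fun i _ => by tauto
      have h4 : (univ.filter (fun i : Fin (n + 2) => c₀ i = 0)).card = k - 1 := by
        rw [hzeroset]
        exact aux_card_filter_lt (by omega)
      have h5 : #(univ : Finset (Fin (n + 2))) = n + 2 := by simp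
      rw [h3, h4, h5] at h1
      omega
    exact ⟨c₀, hc₀mem, hc₀ne, hnormc₀⟩
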